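/- arXiv:2008.08646 — 4 statements merged into one kernel-verified Lean document; each statement's English description precedes it below -/
import Mathlib

section
/- If a simple digraph Γ₀ is obtained from a simple digraph Γ by flipping a single arc (a,b) ∈ E(Γ) (where (b,a) ∉ E(Γ)), i.e., replacing (a,b) by (b,a), then th(Γ₀) ≤ th(Γ) + 1. -/
open Set

/-- One time step of standard zero forcing on a digraph with arc relation `A`:
every blue vertex having a unique white out-neighbor forces it blue. -/
def dstep {V : Type*} (A : V → V → Prop) (S : Set V) : Set V :=
  S ∪ {w | ∃ u ∈ S, A u w ∧ ∀ x, A u x → x ∉ S → x = w}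

/-- `B` is a zero forcing set of the digraph with arc relation `A`. -/
def IsZFS {V : Type*} (A : V → V → Prop) (B : Set V) : Prop :=
  ∃ t, (dstep A)^[t] B = Set.univ

/-- Propagation time of `B` in the digraph with arc relation `A`. -/
noncomputable def dpt {V : Type*} (A : V → V → Prop) (B : Set V) : ℕ :=
  sInf {t | (dstep A)^[t] B = Set.univ}

/-- The throttling number of the digraph with arc relation `A`. -/
noncomputable def dth {V : Type*} (A : V → V → Prop) : ℕ :=
  sInf {k | ∃ B : Set V, IsZFS A B ∧ k = B.ncard + dpt A B}

/-- The digraph obtained by flipping the single arc `(a,b)` to `(b,a)`. -/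
def flipArc {V : Type*} (A : V → V → Prop) (a b : V) : V → V → Prop :=
  fun u v => (A u v ∧ ¬(u = a ∧ v = b)) ∨ (u = b ∧ v = a)

/-! Take an optimal zero forcing set `B` of `Γ` and follow its forcing process `S₀ ⊆ S₁ ⊆ ⋯`.
Since the `Sₜ` form a chain, either `a` is never blue before `b`, or `b` is never blue before `a`.
In the first case `B ∪ {a}` works in the flipped digraph, in the second `B ∪ {b}`: the extra blue
vertex guarantees that, at every time, each blue vertex has the same white out-neighbours in both
digraphs, so the forcing process of `Γ` can be replayed step by step in `Γ₀`, one extra vertex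
and no extra time. -/

section ZeroForcing

variable {V : Type*} {A A' : V → V → Prop} {B S T : Set V}

theorem subset_dstep (A : V → V → Prop) (S : Set V) : S ⊆ dstep A S :=
  subset_union_left

theorem monotone_iterate_dstep (A : V → V → Prop) (B : Set V) :
    Monotone fun t => (dstep A)^[t] B :=
  monotone_nat_of_le_succ fun t => by
    simpa only [Function.iterate_succ_apply'] using subset_dstep A _

theorem dstep_subset_dstep (hST : S ⊆ T) (hA : ∀ u ∈ S, ∀ w ∉ T, A' u w ↔ A u w) :
    dstep A S ⊆ dstep A' T := by
  rintro w (hw | ⟨u, hu, huw, hunique⟩)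
  · exact subset_dstep A' T (hST hw)
  · by_cases hwT : w ∈ T
    · exact subset_dstep A' T hwT
    refine Or.inr ⟨u, hST hu, (hA u hu w hwT).2 huw, fun x hux hxT => ?_⟩
    exact hunique x ((hA u hu x hxT).1 hux) fun hxS => hxT (hST hxS)

theorem iterate_dstep_insert_subset (c : V)
    (hA : ∀ t, ∀ u ∈ (dstep A)^[t] B, ∀ w ∉ insert c ((dstep A)^[t] B), A' u w ↔ A u w) (t : ℕ) :
    insert c ((dstep A)^[t] B) ⊆ (dstep A')^[t] (insert c B) := by
  induction t with
  | zero => rfl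
  | succ t ih =>
    rw [Function.iterate_succ_apply', Function.iterate_succ_apply']
    refine insert_subset ((subset_dstep A' _) (ih (mem_insert c _))) ?_
    refine dstep_subset_dstep ((subset_insert c _).trans ih) fun u hu w hw => hA t u hu w ?_
    exact fun hw' => hw (ih hw')

theorem dpt_le {t : ℕ} (h : (dstep A)^[t] B = univ) : dpt A B ≤ t :=
  Nat.sInf_le h

theorem IsZFS.iterate_dpt (hB : IsZFS A B) : (dstep A)^[dpt A B] B = univ :=
  Nat.sInf_mem hB

theorem IsZFS.dpt_le_of_iterate_subset {B' : Set V} (hB : IsZFS A B)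
    (h : ∀ t, (dstep A)^[t] B ⊆ (dstep A')^[t] B') :
    IsZFS A' B' ∧ dpt A' B' ≤ dpt A B := by
  have hB' : (dstep A')^[dpt A B] B' = univ :=
    univ_subset_iff.1 (hB.iterate_dpt ▸ h (dpt A B))
  exact ⟨⟨_, hB'⟩, dpt_le hB'⟩

theorem dth_le_ncard_add_dpt (hB : IsZFS A B) : dth A ≤ B.ncard + dpt A B :=
  Nat.sInf_le ⟨B, hB, rfl⟩

theorem exists_isZFS_dth_eq (A : V → V → Prop) :
    ∃ B, IsZFS A B ∧ dth A = B.ncard + dpt A B :=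
  Nat.sInf_mem (s := {k | ∃ B : Set V, IsZFS A B ∧ k = B.ncard + dpt A B})
    ⟨_, univ, ⟨0, rfl⟩, rfl⟩

end ZeroForcing

theorem Monotone.forall_mem_imp_or_forall_mem_imp {ι α : Type*} [LinearOrder ι]
    {f : ι → Set α} (hf : Monotone f) (a b : α) :
    (∀ i, a ∈ f i → b ∈ f i) ∨ ∀ i, b ∈ f i → a ∈ f i := by
  by_contra! h
  obtain ⟨⟨i, hai, hbi⟩, ⟨j, hbj, haj⟩⟩ := h
  rcases le_total i j with hij | hji
  · exact haj (hf hij hai)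
  · exact hbi (hf hji hbj)

section FlipArc

variable {V : Type*} {A : V → V → Prop} {a b u w : V} {S : Set V}

theorem flipArc_iff_of_notMem_insert_tail (hS : a ∈ S → b ∈ S) (hu : u ∈ S)
    (hw : w ∉ insert a S) : flipArc A a b u w ↔ A u w := by
  rw [mem_insert_iff, not_or] at hw
  unfold flipArc
  constructor
  · rintro (⟨huw, -⟩ | ⟨-, rfl⟩)
    exacts [huw, absurd rfl hw.1]
  · rintro huw
    refine Or.inl ⟨huw, ?_⟩
    rintro ⟨rfl, rfl⟩
    exact hw.2 (hS hu)

theorem flipArc_iff_of_notMem_insert_head (hS : b ∈ S → a ∈ S) (hu : u ∈ S)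
    (hw : w ∉ insert b S) : flipArc A a b u w ↔ A u w := by
  rw [mem_insert_iff, not_or] at hw
  unfold flipArc
  constructor
  · rintro (⟨huw, -⟩ | ⟨rfl, rfl⟩)
    exacts [huw, absurd (hS hu) hw.2]
  · exact fun huw => Or.inl ⟨huw, fun h => hw.1 h.2⟩

end FlipArc

theorem stmt0_general {V : Type*} (A : V → V → Prop) (a b : V) :
    dth (flipArc A a b) ≤ dth A + 1 := by
  obtain ⟨B, hB, hdth⟩ := exists_isZFS_dth_eq A
  have hagree : ∃ c : V, ∀ t, ∀ u ∈ (dstep A)^[t] B, ∀ w ∉ insert c ((dstep A)^[t] B),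
      flipArc A a b u w ↔ A u w := by
    rcases (monotone_iterate_dstep A B).forall_mem_imp_or_forall_mem_imp a b with h | h
    · exact ⟨a, fun t _ hu _ hw => flipArc_iff_of_notMem_insert_tail (h t) hu hw⟩
    · exact ⟨b, fun t _ hu _ hw => flipArc_iff_of_notMem_insert_head (h t) hu hw⟩
  obtain ⟨c, hc⟩ := hagree
  obtain ⟨hZFS, hdpt⟩ := hB.dpt_le_of_iterate_subset fun t =>
    (subset_insert c _).trans (iterate_dstep_insert_subset c hc t)
  calc dth (flipArc A a b)
      ≤ (insert c B).ncard + dpt (flipArc A a b) (insert c B) := dth_le_ncard_add_dpt hZFS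
    _ ≤ B.ncard + 1 + dpt A B := add_le_add (ncard_insert_le c B) hdpt
    _ = dth A + 1 := by omega

/-- Flipping a single arc cannot increase the throttling number by more than one. -/
theorem stmt0 {V : Type*} [Fintype V] (A : V → V → Prop) (hirr : Irreflexive A)
    (a b : V) (hab : A a b) (hba : ¬ A b a) :
    dth (flipArc A a b) ≤ dth A + 1 :=
  stmt0_general A a b
end

section
/- Let G be a simple graph with at least one edge, and let [m,M] be the orientation throttling interval of G (m and M are the minimum and maximum of th(G⃗) over all orientations G⃗ of G). Then m ≤ th(G) and α(G) + 1 ≤ M, where α(G) is the independence number of G. -/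
open Set

/-- One time step of standard zero forcing on an undirected graph `G`. -/
def ustep {V : Type*} (G : SimpleGraph V) (S : Set V) : Set V :=
  S ∪ {w | ∃ u ∈ S, G.Adj u w ∧ ∀ x, G.Adj u x → x ∉ S → x = w}

/-- The throttling number of the undirected graph `G`. -/
noncomputable def uth {V : Type*} (G : SimpleGraph V) : ℕ :=
  sInf {k | ∃ B : Set V, (∃ t, (ustep G)^[t] B = Set.univ) ∧
    k = B.ncard + sInf {t | (ustep G)^[t] B = Set.univ}}

/-- `A` is an orientation of the simple graph `G`: every arc lies on an edge of `G`,
and each edge of `G` gets exactly one direction. -/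
def IsOrientation {V : Type*} (G : SimpleGraph V) (A : V → V → Prop) : Prop :=
  (∀ u v, A u v → G.Adj u v) ∧ ∀ u v, G.Adj u v → (A u v ↔ ¬ A v u)

/-- The independence number of `G`. -/
noncomputable def indepNum {V : Type*} (G : SimpleGraph V) : ℕ :=
  sSup {n | ∃ s : Finset V, (∀ a ∈ s, ∀ b ∈ s, a ≠ b → ¬ G.Adj a b) ∧ s.card = n}

/-!
For `m ≤ th(G)`, take a set `B` realising `th(G)` and orient every edge along which a force
occurs in the undirected process from `B` in the direction of that force (forces never go both
ways along an edge, since the blue set only grows); the oriented process from `B` then colours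
at least as fast, so `th(G⃗) ≤ |B| + pt(B) = th(G)`. For `α(G) + 1 ≤ M`, orient all edges at a
maximum independent set `S` away from it: no vertex of `S` can ever be forced, so every zero
forcing set contains `S`, and it is either all of `V` (which strictly contains `S` because `G`
has an edge) or needs at least one step.
-/

section

variable {V : Type*}

lemma exists_isOrientation_ge (G : SimpleGraph V) (R : V → V → Prop)
    (hRG : ∀ u v, R u v → G.Adj u v) (hR : ∀ u v, R u v → ¬ R v u) :
    ∃ A, IsOrientation G A ∧ R ≤ A := by
  -- edges on which `R` is silent are directed along a fixed strict total order
  refine ⟨fun u v => G.Adj u v ∧ (R u v ∨ (¬ R v u ∧ WellOrderingRel u v)),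
    ⟨fun u v h => h.1, fun u v huv => ?_⟩, fun u v h => ⟨hRG u v h, Or.inl h⟩⟩
  have hne : u ≠ v := huv.ne
  by_cases hvu : R v u
  · simp [hvu, hR v u hvu, huv.symm]
  by_cases huv' : R u v
  · simp [huv', hR u v huv', huv]
  simp only [huv, huv.symm, hvu, huv', not_false_eq_true, true_and, false_or]
  exact ⟨fun h h' => asymm h h', fun h => (trichotomous_of WellOrderingRel u v).resolve_right
    (not_or.2 ⟨hne, h⟩)⟩

section Directed

variable (A : V → V → Prop)

lemma dth_le {B : Set V} {t : ℕ} (hB : (dstep A)^[t] B = univ) : dth A ≤ B.ncard + t :=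
  calc dth A ≤ B.ncard + dpt A B := Nat.sInf_le ⟨B, ⟨t, hB⟩, rfl⟩
    _ ≤ B.ncard + t := Nat.add_le_add_left (Nat.sInf_le (show t ∈ _ from hB)) _

lemma dth_le_card [Fintype V] : dth A ≤ Fintype.card V := by
  simpa using dth_le A (B := univ) (t := 0) rfl

lemma le_dth {k : ℕ} (h : ∀ B, IsZFS A B → k ≤ B.ncard + dpt A B) : k ≤ dth A :=
  le_csInf ⟨_, univ, ⟨0, rfl⟩, rfl⟩ fun _ ⟨B, hB, hk⟩ => hk ▸ h B hB

lemma mem_of_mem_iterate_dstep {B : Set V} {v : V} (hv : ∀ u, ¬ A u v) :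
    ∀ t, v ∈ (dstep A)^[t] B → v ∈ B
  | 0, h => h
  | t + 1, h => by
    rw [Function.iterate_succ_apply'] at h
    rcases h with h | ⟨u, -, huv, -⟩
    · exact mem_of_mem_iterate_dstep hv t h
    · exact absurd huv (hv u)

lemma card_add_one_le_dth [Fintype V] (s : Finset V) (hs : ∀ v ∈ s, ∀ u, ¬ A u v)
    (hsV : s ≠ Finset.univ) : s.card + 1 ≤ dth A := by
  refine le_dth A fun B hB => ?_
  have hfull : (dstep A)^[dpt A B] B = univ := Nat.sInf_mem hB
  have hsB : (s : Set V) ⊆ B := fun v hv =>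
    mem_of_mem_iterate_dstep A (hs v hv) _ (hfull ▸ mem_univ v)
  have hsB_card : s.card ≤ B.ncard := by
    simpa using Set.ncard_le_ncard hsB
  rcases Nat.eq_zero_or_pos (dpt A B) with h0 | h0
  · have hBV : B.ncard = Fintype.card V := by
      rw [h0] at hfull
      simp [show B = univ from hfull]
    have := Finset.card_lt_card (Finset.ssubset_univ_iff.mpr hsV)
    simp only [Finset.card_univ] at this
    omega
  · omega

end Directed

section Undirected

variable (G : SimpleGraph V) (B : Set V)

lemma monotone_iterate_ustep : Monotone fun t => (ustep G)^[t] B :=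
  monotone_nat_of_le_succ fun t => by
    rw [Function.iterate_succ_apply']
    exact subset_union_left

lemma exists_uth_eq : ∃ (B : Set V) (t : ℕ), (ustep G)^[t] B = univ ∧ uth G = B.ncard + t := by
  obtain ⟨B, hB, hk⟩ := Nat.sInf_mem (⟨_, univ, ⟨0, rfl⟩, rfl⟩ :
    {k | ∃ B : Set V, (∃ t, (ustep G)^[t] B = univ) ∧
      k = B.ncard + sInf {t | (ustep G)^[t] B = univ}}.Nonempty)
  exact ⟨B, _, Nat.sInf_mem hB, hk⟩

def Forces (u w : V) : Prop :=
  ∃ t, u ∈ (ustep G)^[t] B ∧ w ∉ (ustep G)^[t] B ∧ G.Adj u w ∧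
    ∀ x, G.Adj u x → x ∉ (ustep G)^[t] B → x = w

variable {G B}

lemma Forces.adj {u w : V} : Forces G B u w → G.Adj u w
  | ⟨_, _, _, huw, _⟩ => huw

lemma Forces.not_symm {u w : V} (h : Forces G B u w) : ¬ Forces G B w u := by
  obtain ⟨t, hu, hw, -⟩ := h
  rintro ⟨t', hw', hu', -⟩
  rcases le_total t t' with htt' | ht't
  · exact hu' (monotone_iterate_ustep G B htt' hu)
  · exact hw (monotone_iterate_ustep G B ht't hw')

lemma iterate_ustep_subset_iterate_dstep {A : V → V → Prop} (hAG : ∀ u v, A u v → G.Adj u v)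
    (hA : Forces G B ≤ A) : ∀ t, (ustep G)^[t] B ⊆ (dstep A)^[t] B
  | 0 => subset_rfl
  | t + 1 => by
    have ih := iterate_ustep_subset_iterate_dstep hAG hA t
    rw [Function.iterate_succ_apply', Function.iterate_succ_apply']
    rintro w (hw | ⟨u, hu, huw, huniq⟩)
    · exact Or.inl (ih hw)
    by_cases hwS : w ∈ (ustep G)^[t] B
    · exact Or.inl (ih hwS)
    refine Or.inr ⟨u, ih hu, hA u w ⟨t, hu, hwS, huw, huniq⟩, fun x hux hxT => ?_⟩
    exact huniq x (hAG u x hux) fun hxS => hxT (ih hxS)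

end Undirected

lemma exists_isOrientation_dth_le_uth (G : SimpleGraph V) :
    ∃ A, IsOrientation G A ∧ dth A ≤ uth G := by
  obtain ⟨B, t, hB, hth⟩ := exists_uth_eq G
  obtain ⟨A, hA, hFA⟩ := exists_isOrientation_ge G (Forces G B) (fun _ _ h => h.adj)
    fun _ _ h => h.not_symm
  have hAB : (dstep A)^[t] B = univ :=
    eq_univ_of_univ_subset (hB ▸ iterate_ustep_subset_iterate_dstep hA.1 hFA t)
  exact ⟨A, hA, hth ▸ dth_le A hAB⟩

lemma exists_isOrientation_indepNum_lt_dth [Fintype V] (G : SimpleGraph V)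
    (he : ∃ u v, G.Adj u v) : ∃ A, IsOrientation G A ∧ indepNum G + 1 ≤ dth A := by
  obtain ⟨s, hs, hcard⟩ := Nat.sSup_mem
    (⟨0, ∅, by simp, rfl⟩ : {n | ∃ s : Finset V,
      (∀ a ∈ s, ∀ b ∈ s, a ≠ b → ¬ G.Adj a b) ∧ s.card = n}.Nonempty)
    ⟨Fintype.card V, by rintro n ⟨s, -, rfl⟩; exact s.card_le_univ⟩
  -- the vertices of `s` become sources, which every zero forcing set must contain
  obtain ⟨A, hA, hsA⟩ := exists_isOrientation_ge G (fun u v => G.Adj u v ∧ u ∈ s ∧ v ∉ s)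
    (fun _ _ h => h.1) fun _ _ h h' => h'.2.2 h.2.1
  have hsrc : ∀ v ∈ s, ∀ u, ¬ A u v := by
    intro v hv u huv
    have hadj := hA.1 u v huv
    by_cases hu : u ∈ s
    · exact hs u hu v hv hadj.ne hadj
    · exact (hA.2 v u hadj.symm).1 (hsA v u ⟨hadj.symm, hv, hu⟩) huv
  have hsV : s ≠ Finset.univ := by
    obtain ⟨u, v, huv⟩ := he
    rintro rfl
    exact hs u (Finset.mem_univ u) v (Finset.mem_univ v) huv.ne huv
  have hα : indepNum G = s.card := hcard.symm
  exact ⟨A, hA, hα ▸ card_add_one_le_dth A s hsrc hsV⟩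

end

/-- If `[m, M]` is the orientation throttling interval of a graph `G` with at least one
edge, then `m ≤ th(G)` and `α(G) + 1 ≤ M`. -/
theorem stmt10 {V : Type*} [Fintype V] (G : SimpleGraph V)
    (he : ∃ u v, G.Adj u v) :
    sInf {k | ∃ A : V → V → Prop, IsOrientation G A ∧ dth A = k} ≤ uth G ∧
    indepNum G + 1 ≤ sSup {k | ∃ A : V → V → Prop, IsOrientation G A ∧ dth A = k} := by
  obtain ⟨A₁, hA₁, h₁⟩ := exists_isOrientation_dth_le_uth G
  obtain ⟨A₂, hA₂, h₂⟩ := exists_isOrientation_indepNum_lt_dth G he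
  have hbdd : BddAbove {k | ∃ A : V → V → Prop, IsOrientation G A ∧ dth A = k} :=
    ⟨Fintype.card V, by rintro k ⟨A, -, rfl⟩; exact dth_le_card A⟩
  refine ⟨(Nat.sInf_le ?_).trans h₁, h₂.trans (le_csSup hbdd ?_)⟩
  exacts [⟨A₁, hA₁, rfl⟩, ⟨A₂, hA₂, rfl⟩]
end

section
/- If G is a simple graph with at least one edge and th(G) ≤ α(G) + 1, then for every integer k with th(G) ≤ k ≤ α(G) + 1, there is an orientation G⃗ of G with th(G⃗) = k. -/
/-!
Reversing a single arc changes the throttling number by at most one: if `v` is the endpoint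
of the reversed edge that turns blue last, adding `v` to an optimal zero forcing set lets every
force of the old process still happen at the same time. Hence along a sequence of single-arc
reversals from one orientation to another, the throttling number takes every intermediate value.
At the low end, orienting each edge of `G` from the endpoint that turns blue first in an optimal
undirected process keeps that process valid, so some orientation has `th ≤ th(G)`. At the high
end, making a maximum independent set `I` a set of sources forces `I` into every zero forcing
set; as `I ≠ V`, either a further vertex is initially blue or at least one time step is needed,
so that orientation has `th ≥ α(G) + 1`.
-/

open Set

open Function

namespace ZeroForcing

variable {V : Type*}

theorem iterate_dstep_mono (A : V → V → Prop) (B : Set V) :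
    Monotone fun t => (dstep A)^[t] B :=
  monotone_nat_of_le_succ fun t => by
    rw [iterate_succ_apply']
    exact subset_union_left

theorem exists_isZFS_dth_eq (A : V → V → Prop) :
    ∃ B : Set V, IsZFS A B ∧ dth A = B.ncard + dpt A B :=
  Nat.sInf_mem (s := {k | ∃ B : Set V, IsZFS A B ∧ k = B.ncard + dpt A B})
    ⟨_, univ, ⟨0, rfl⟩, rfl⟩

theorem le_dth {A : V → V → Prop} {m : ℕ} (h : ∀ B, IsZFS A B → m ≤ B.ncard + dpt A B) :
    m ≤ dth A := by
  obtain ⟨B, hB, hdth⟩ := exists_isZFS_dth_eq A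
  exact hdth ▸ h B hB

theorem iterate_dpt_eq_univ {A : V → V → Prop} {B : Set V} (hB : IsZFS A B) :
    (dstep A)^[dpt A B] B = univ :=
  Nat.sInf_mem hB

theorem uth_eq_dth_adj (G : SimpleGraph V) : uth G = dth G.Adj := rfl

noncomputable def blueTime (A : V → V → Prop) (B : Set V) (w : V) : ℕ :=
  sInf {t | w ∈ (dstep A)^[t] B}

theorem blueTime_le_iff {A : V → V → Prop} {B : Set V} (hB : IsZFS A B) {w : V} {t : ℕ} :
    blueTime A B w ≤ t ↔ w ∈ (dstep A)^[t] B := by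
  obtain ⟨T, hT⟩ := hB
  have hne : {t | w ∈ (dstep A)^[t] B}.Nonempty := ⟨T, show w ∈ _ from hT ▸ mem_univ w⟩
  exact ⟨fun h => iterate_dstep_mono A B h (Nat.sInf_mem hne), fun h => Nat.sInf_le h⟩

theorem dstep_subset_dstep {A A' : V → V → Prop} {D E : Set V} (hDE : D ⊆ E)
    (h : ∀ a ∈ D, ∀ y ∉ E, A a y ↔ A' a y) : dstep A D ⊆ dstep A' E := by
  rintro x (hx | ⟨a, ha, hax, huniq⟩)
  · exact subset_union_left (hDE hx)
  · by_cases hxE : x ∈ E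
    · exact subset_union_left hxE
    refine subset_union_right ⟨a, hDE ha, (h a ha x hxE).1 hax, fun y hay hyE => ?_⟩
    exact huniq y ((h a ha y hyE).2 hay) fun hyD => hyE (hDE hyD)

theorem iterate_dstep_subset {A A' : V → V → Prop} {B B' : Set V} (hBB' : B ⊆ B')
    (h : ∀ t, ∀ a ∈ (dstep A)^[t] B, ∀ y ∉ (dstep A)^[t] B, y ∉ B' → (A a y ↔ A' a y)) :
    ∀ t, (dstep A)^[t] B ⊆ (dstep A')^[t] B' := by
  intro t
  induction t with
  | zero => exact hBB'
  | succ t ih =>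
    rw [iterate_succ_apply', iterate_succ_apply']
    refine dstep_subset_dstep ih fun a ha y hyE => h t a ha y (fun hy => hyE (ih hy)) ?_
    exact fun hy => hyE (iterate_dstep_mono A' B' (Nat.zero_le t) hy)

theorem dth_le_of_iterate_subset {A A' : V → V → Prop} {B B' : Set V} (hB : IsZFS A B)
    (h : ∀ t, (dstep A)^[t] B ⊆ (dstep A')^[t] B') : dth A' ≤ B'.ncard + dpt A B := by
  have hB' : (dstep A')^[dpt A B] B' = univ :=
    eq_univ_of_univ_subset (iterate_dpt_eq_univ hB ▸ h _)
  calc dth A' ≤ B'.ncard + dpt A' B' := Nat.sInf_le ⟨B', ⟨_, hB'⟩, rfl⟩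
    _ ≤ B'.ncard + dpt A B := Nat.add_le_add_left (Nat.sInf_le hB') _

theorem dth_le_dth_add_one_of_agree_off_edge {A A' : V → V → Prop} {u v : V}
    (h : ∀ x y, s(x, y) ≠ s(u, v) → (A x y ↔ A' x y)) : dth A' ≤ dth A + 1 := by
  obtain ⟨B, hB, hdth⟩ := exists_isZFS_dth_eq A
  wlog huv : blueTime A B u ≤ blueTime A B v generalizing u v
  · refine this (u := v) (v := u) (fun x y hxy => h x y ?_) (not_le.1 huv).le
    rwa [Sym2.eq_swap (a := u)]
  have hsub : ∀ t, (dstep A)^[t] B ⊆ (dstep A')^[t] (insert v B) := by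
    refine iterate_dstep_subset (subset_insert v B) fun t a ha y hy hyv => ?_
    by_cases hay : s(a, y) = s(u, v)
    · rcases Sym2.eq_iff.1 hay with ⟨-, rfl⟩ | ⟨rfl, rfl⟩
      · exact absurd (mem_insert y B) hyv
      · exact absurd ((blueTime_le_iff hB).1 (huv.trans ((blueTime_le_iff hB).2 ha))) hy
    · exact h a y hay
  have := dth_le_of_iterate_subset hB hsub
  have := ncard_insert_le v B
  omega

open Classical in
def reverseEdge (A : V → V → Prop) (u v : V) : V → V → Prop :=
  fun x y => if s(x, y) = s(u, v) then A y x else A x y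

theorem dth_reverseEdge_le (A : V → V → Prop) (u v : V) :
    dth (reverseEdge A u v) ≤ dth A + 1 :=
  dth_le_dth_add_one_of_agree_off_edge fun x y hxy => by rw [reverseEdge, if_neg hxy]

theorem isOrientation_reverseEdge {G : SimpleGraph V} {A : V → V → Prop}
    (hA : IsOrientation G A) (u v : V) : IsOrientation G (reverseEdge A u v) := by
  refine ⟨fun x y hxy => ?_, fun x y hxy => ?_⟩
  · unfold reverseEdge at hxy
    split_ifs at hxy
    · exact (hA.1 y x hxy).symm
    · exact hA.1 x y hxy
  · unfold reverseEdge
    rw [Sym2.eq_swap (a := y)]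
    split_ifs
    · exact hA.2 y x hxy.symm
    · exact hA.2 x y hxy

theorem IsOrientation.eq_of_le {G : SimpleGraph V} {A A' : V → V → Prop}
    (hA : IsOrientation G A) (hA' : IsOrientation G A') (h : ∀ x y, A x y → A' x y) :
    A = A' := by
  funext x y
  refine propext ⟨h x y, fun hxy' => by_contra fun hxy => ?_⟩
  have hadj := hA'.1 x y hxy'
  exact (hA'.2 x y hadj).1 hxy' (h y x ((hA.2 y x hadj.symm).2 hxy))

def arcDiff (A A' : V → V → Prop) : Set (V × V) :=
  {p | A p.1 p.2 ∧ ¬ A' p.1 p.2}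

theorem arcDiff_reverseEdge {G : SimpleGraph V} {A A' : V → V → Prop}
    (hA : IsOrientation G A) (hA' : IsOrientation G A') {u v : V}
    (huv : (u, v) ∈ arcDiff A A') :
    arcDiff (reverseEdge A u v) A' = arcDiff A A' \ {(u, v)} := by
  obtain ⟨hAuv, hA'uv⟩ := huv
  have hadj := hA.1 u v hAuv
  ext ⟨x, y⟩
  simp only [arcDiff, reverseEdge, mem_ofPred_eq, mem_sdiff, mem_singleton_iff, Prod.mk.injEq]
  split_ifs with hxy
  · rcases Sym2.eq_iff.1 hxy with ⟨rfl, rfl⟩ | ⟨rfl, rfl⟩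
    · simp [(hA.2 x y hadj).1 hAuv]
    · simp [(hA'.2 x y hadj.symm).2 hA'uv]
  · have : ¬ (x = u ∧ y = v) := fun h => hxy (by rw [h.1, h.2])
    tauto

theorem exists_orientation_dth_eq [Finite V] {G : SimpleGraph V} {A A' : V → V → Prop}
    (hA : IsOrientation G A) (hA' : IsOrientation G A') {k : ℕ} (hk : dth A ≤ k)
    (hk' : k ≤ dth A') : ∃ A'', IsOrientation G A'' ∧ dth A'' = k := by
  induction hn : (arcDiff A A').ncard generalizing A with
  | zero =>
    have hempty : arcDiff A A' = ∅ := (ncard_eq_zero).1 hn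
    have hAA' : A = A' := IsOrientation.eq_of_le hA hA' fun x y hxy => by_contra fun hxy' =>
      eq_empty_iff_forall_notMem.1 hempty (x, y) ⟨hxy, hxy'⟩
    exact ⟨A, hA, le_antisymm hk (hAA' ▸ hk')⟩
  | succ n ih =>
    obtain ⟨⟨u, v⟩, huv⟩ := nonempty_of_ncard_ne_zero (by rw [hn]; exact n.succ_ne_zero)
    rcases le_or_gt (dth (reverseEdge A u v)) k with hle | hlt
    · refine ih (isOrientation_reverseEdge hA u v) hle ?_
      rw [arcDiff_reverseEdge hA hA' huv, ncard_sdiff_singleton_of_mem huv, hn, Nat.add_sub_cancel]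
    · have := dth_reverseEdge_le A u v
      exact ⟨A, hA, by omega⟩

def orientBy {α : Type*} [LinearOrder α] (G : SimpleGraph V) (r : V → α) : V → V → Prop :=
  fun x y => G.Adj x y ∧ r x < r y

theorem isOrientation_orientBy {α : Type*} [LinearOrder α] (G : SimpleGraph V) {r : V → α}
    (hr : Injective r) : IsOrientation G (orientBy G r) := by
  refine ⟨fun _ _ h => h.1, fun x y hxy => ?_⟩
  have hne := hr.ne hxy.ne
  simp only [orientBy, hxy, hxy.symm, true_and, not_lt]
  exact ⟨le_of_lt, (lt_of_le_of_ne · hne)⟩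

theorem injective_toLex_prod {α β : Type*} (f : V → α) {g : V → β} (hg : Injective g) :
    Injective fun w => toLex (f w, g w) :=
  fun _ _ h => hg (Prod.ext_iff.1 (toLex.injective h)).2

theorem dth_orientBy_blueTime_le {G : SimpleGraph V} {B : Set V} (hB : IsZFS G.Adj B)
    (e : V → ℕ) : dth (orientBy G fun w => toLex (blueTime G.Adj B w, e w)) ≤
      B.ncard + dpt G.Adj B := by
  refine dth_le_of_iterate_subset hB (iterate_dstep_subset subset_rfl fun t a ha y hy _ => ?_)
  have hlt : blueTime G.Adj B a < blueTime G.Adj B y :=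
    ((blueTime_le_iff hB).2 ha).trans_lt (not_le.1 (mt (blueTime_le_iff hB).1 hy))
  simp [orientBy, Prod.Lex.toLex_lt_toLex, hlt]

theorem exists_orientation_dth_le_uth [Countable V] (G : SimpleGraph V) :
    ∃ A, IsOrientation G A ∧ dth A ≤ uth G := by
  obtain ⟨e, he⟩ := Countable.exists_injective_nat V
  obtain ⟨B, hB, hdth⟩ := exists_isZFS_dth_eq G.Adj
  exact ⟨_, isOrientation_orientBy G (injective_toLex_prod _ he),
    (dth_orientBy_blueTime_le hB e).trans (uth_eq_dth_adj G ▸ hdth).ge⟩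

theorem subset_of_isZFS {A : V → V → Prop} {I B : Set V} (hI : ∀ w ∈ I, ∀ a, ¬ A a w)
    (hB : IsZFS A B) : I ⊆ B := by
  intro w hw
  have hstays : ∀ t, w ∈ (dstep A)^[t] B → w ∈ B := by
    intro t
    induction t with
    | zero => exact id
    | succ t ih =>
      rw [iterate_succ_apply']
      rintro (h | ⟨a, -, haw, -⟩)
      exacts [ih h, absurd haw (hI w hw a)]
  obtain ⟨T, hT⟩ := hB
  exact hstays T (hT ▸ mem_univ w)

theorem ncard_add_one_le_dth [Finite V] {A : V → V → Prop} {I : Set V}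
    (hI : ∀ w ∈ I, ∀ a, ¬ A a w) (hIV : I ≠ univ) : I.ncard + 1 ≤ dth A := by
  refine le_dth fun B hB => ?_
  have hIB := subset_of_isZFS hI hB
  by_cases hBV : B = univ
  · have := ncard_lt_ncard (ssubset_iff_subset_ne.2 ⟨hIB, hBV ▸ hIV⟩)
    omega
  · have : dpt A B ≠ 0 := fun h0 => hBV (by simpa [h0] using iterate_dpt_eq_univ hB)
    have := ncard_le_ncard hIB
    omega

theorem exists_indep_card_eq_indepNum [Finite V] (G : SimpleGraph V) :
    ∃ s : Finset V, (∀ a ∈ s, ∀ b ∈ s, a ≠ b → ¬ G.Adj a b) ∧ s.card = indepNum G := by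
  refine Nat.sSup_mem
    (s := {n | ∃ s : Finset V, (∀ a ∈ s, ∀ b ∈ s, a ≠ b → ¬ G.Adj a b) ∧ s.card = n})
    ⟨0, ∅, by simp, rfl⟩ ⟨Nat.card V, ?_⟩
  rintro _ ⟨s, -, rfl⟩
  exact ncard_coe_finset s ▸ ncard_le_card _

theorem exists_orientation_indepNum_add_one_le_dth [Finite V] (G : SimpleGraph V)
    (he : ∃ u v, G.Adj u v) : ∃ A, IsOrientation G A ∧ indepNum G + 1 ≤ dth A := by
  classical
  obtain ⟨I, hI, hcard⟩ := exists_indep_card_eq_indepNum G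
  obtain ⟨e, he'⟩ := Countable.exists_injective_nat V
  let r : V → ℕ ×ₗ ℕ := fun w => toLex (if w ∈ I then 0 else 1, e w)
  refine ⟨orientBy G r, isOrientation_orientBy G (injective_toLex_prod _ he'), ?_⟩
  have hsources : ∀ w ∈ (I : Set V), ∀ a, ¬ orientBy G r a w := by
    rintro w hw a ⟨haw, hlt⟩
    have ha : a ∉ I := fun ha => hI a ha w hw haw.ne haw
    simp [r, ha, Finset.mem_coe.1 hw, Prod.Lex.toLex_lt_toLex] at hlt
  have hIV : (I : Set V) ≠ univ := by
    obtain ⟨u, v, huv⟩ := he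
    intro hIV
    have hmem : ∀ w, w ∈ I := fun w => Finset.mem_coe.1 (hIV ▸ mem_univ w)
    exact hI u (hmem u) v (hmem v) huv.ne huv
  simpa [hcard] using ncard_add_one_le_dth hsources hIV

end ZeroForcing

theorem stmt11_general {V : Type*} [Fintype V] (G : SimpleGraph V)
    (he : ∃ u v, G.Adj u v) :
    ∀ k : ℕ, uth G ≤ k → k ≤ indepNum G + 1 →
      ∃ A : V → V → Prop, IsOrientation G A ∧ dth A = k := by
  intro k hk hk'
  obtain ⟨A₀, hA₀, hlow⟩ := ZeroForcing.exists_orientation_dth_le_uth G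
  obtain ⟨A₁, hA₁, hhigh⟩ := ZeroForcing.exists_orientation_indepNum_add_one_le_dth G he
  exact ZeroForcing.exists_orientation_dth_eq hA₀ hA₁ (hlow.trans hk) (hk'.trans hhigh)

/-- If `th(G) ≤ α(G) + 1`, then every integer in `[th(G), α(G) + 1]` is the throttling
number of some orientation of `G`. -/
theorem stmt11 {V : Type*} [Fintype V] (G : SimpleGraph V)
    (he : ∃ u v, G.Adj u v) (h : uth G ≤ indepNum G + 1) :
    ∀ k : ℕ, uth G ≤ k → k ≤ indepNum G + 1 →
      ∃ A : V → V → Prop, IsOrientation G A ∧ dth A = k :=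
  stmt11_general G he
end

section
/- Let Γ⃗ be an oriented graph and u a vertex adjacent to k leaves (vertices of degree 1 in the underlying graph). Then every zero forcing set of Γ⃗ contains at least k − 1 of the leaves adjacent to u. -/
/-!
A leaf outside a zero forcing set `B` has `u` as its only possible in-neighbour. If `u → l` is
not an arc, `l` is a source, and a source can never be forced. Otherwise two such leaves `a ≠ b`
would both be out-neighbours of `u` with in-neighbourhood exactly `{u}`, so `{a, b}` is a fort:
`u` always sees both of them white and can force neither. Hence at most one leaf lies outside `B`.
-/

open Set

/-- No vertex outside the fort `F` has exactly one out-neighbour in `F`. -/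
def IsFort {V : Type*} (A : V → V → Prop) (F : Set V) : Prop :=
  F.Nonempty ∧ ∀ v ∉ F, ∀ w ∈ F, A v w → ∃ x ∈ F, x ≠ w ∧ A v x

section Forts

variable {V : Type*} {A : V → V → Prop}

theorem disjoint_dstep_of_isFort {F S : Set V} (hF : IsFort A F) (hS : Disjoint S F) :
    Disjoint (dstep A S) F := by
  rw [Set.disjoint_left]
  rintro w (hwS | ⟨v, hvS, hvw, hforce⟩) hwF
  · exact Set.disjoint_left.mp hS hwS hwF
  · obtain ⟨x, hxF, hxw, hvx⟩ := hF.2 v (Set.disjoint_left.mp hS hvS) w hwF hvw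
    exact hxw (hforce x hvx fun hxS => Set.disjoint_left.mp hS hxS hxF)

theorem disjoint_iterate_dstep_of_isFort {F S : Set V} (hF : IsFort A F) (hS : Disjoint S F)
    (t : ℕ) : Disjoint ((dstep A)^[t] S) F := by
  induction t with
  | zero => exact hS
  | succ t ih =>
    rw [Function.iterate_succ_apply']
    exact disjoint_dstep_of_isFort hF ih

theorem IsZFS.inter_nonempty_of_isFort {B F : Set V} (hB : IsZFS A B) (hF : IsFort A F) :
    (B ∩ F).Nonempty := by
  obtain ⟨t, ht⟩ := hB
  by_contra hBF
  have hdisj := disjoint_iterate_dstep_of_isFort hF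
    (Set.disjoint_iff_inter_eq_empty.mpr (Set.not_nonempty_iff_eq_empty.mp hBF)) t
  rw [ht, Set.univ_disjoint] at hdisj
  exact hF.1.ne_empty hdisj

theorem isFort_singleton_of_forall_not_adj {l : V} (hl : ∀ v, ¬ A v l) : IsFort A {l} :=
  ⟨Set.singleton_nonempty l, fun v _ _ hw hvw =>
    (hl v (Set.mem_singleton_iff.mp hw ▸ hvw)).elim⟩

theorem isFort_pair_of_adj_iff {a b : V} (hab : a ≠ b) (htwin : ∀ v, A v a ↔ A v b) :
    IsFort A {a, b} := by
  refine ⟨Set.insert_nonempty a {b}, fun v _ w hw hvw => ?_⟩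
  rcases hw with rfl | rfl
  · exact ⟨b, by simp, hab.symm, (htwin v).mp hvw⟩
  · exact ⟨a, by simp, hab, (htwin v).mpr hvw⟩

theorem IsZFS.mem_of_forall_not_adj {B : Set V} (hB : IsZFS A B) {l : V}
    (hl : ∀ v, ¬ A v l) : l ∈ B := by
  obtain ⟨x, hxB, rfl⟩ := hB.inter_nonempty_of_isFort (isFort_singleton_of_forall_not_adj hl)
  exact hxB

theorem IsZFS.mem_or_mem_of_adj_iff {B : Set V} (hB : IsZFS A B) {a b : V} (hab : a ≠ b)
    (htwin : ∀ v, A v a ↔ A v b) : a ∈ B ∨ b ∈ B := by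
  obtain ⟨x, hxB, rfl | rfl⟩ := hB.inter_nonempty_of_isFort (isFort_pair_of_adj_iff hab htwin)
  · exact Or.inl hxB
  · exact Or.inr hxB

end Forts

theorem stmt16_general {V : Type*} [DecidableEq V] (A : V → V → Prop)
    (u : V) (L : Finset V)
    (hL : ∀ l ∈ L, (A l u ∨ A u l) ∧ ∀ y, (A l y ∨ A y l) → y = u)
    (B : Finset V) (hB : IsZFS A (↑B : Set V)) :
    L.card - 1 ≤ (L ∩ B).card := by
  have hin : ∀ l ∈ L, ∀ v, A v l → v = u := fun l hl v hvl => (hL l hl).2 v (Or.inr hvl)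
  have hout : ∀ l ∈ L, l ∉ B → A u l := fun l hl hlB => by
    by_contra hul
    exact hlB (hB.mem_of_forall_not_adj fun v hvl => hul (hin l hl v hvl ▸ hvl))
  have hin_iff : ∀ l ∈ L \ B, ∀ v, A v l ↔ v = u := fun l hl v => by
    rw [Finset.mem_sdiff] at hl
    exact ⟨hin l hl.1 v, fun hvu => hvu ▸ hout l hl.1 hl.2⟩
  have hsdiff : (L \ B).card ≤ 1 := by
    refine Finset.card_le_one.mpr fun a ha b hb => by_contra fun hab => ?_
    have htwin : ∀ v, A v a ↔ A v b := fun v => by rw [hin_iff a ha, hin_iff b hb]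
    rw [Finset.mem_sdiff] at ha hb
    exact (hB.mem_or_mem_of_adj_iff hab htwin).elim ha.2 hb.2
  have hsplit := Finset.card_inter_add_card_sdiff L B
  omega

/-- If `u` is adjacent to the leaves in `L` (each of degree one in the underlying graph) in
an oriented graph, then any zero forcing set contains all but at most one of them. -/
theorem stmt16 {V : Type*} [Fintype V] [DecidableEq V] (A : V → V → Prop)
    (hasym : ∀ u v, A u v → ¬ A v u)
    (u : V) (L : Finset V)
    (hL : ∀ l ∈ L, (A l u ∨ A u l) ∧ ∀ y, (A l y ∨ A y l) → y = u)
    (B : Finset V) (hB : IsZFS A (↑B : Set V)) :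
    L.card - 1 ≤ (L ∩ B).card :=
  stmt16_general A u L hL B hB
end
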